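/- arXiv:1312.6875 — 2 statements merged into one kernel-verified Lean document; each statement's English description precedes it below -/
import Mathlib

section
/- Let W be a discrete memoryless channel with R_cr < C, and let Q ∈ P(𝒳) be such that the pair (Q,W) is nonsingular. Then for every ρ ∈ [0,1] and every λ ∈ ℝ, the second derivative of the cumulant generating function is strictly positive: Λ_ρ''(λ) > 0. -/
open Real BigOperators
open scoped Classical

namespace RCB

/-- A probability distribution on a finite alphabet. -/
def IsDist {α : Type*} [Fintype α] (Q : α → ℝ) : Prop :=
  (∀ a, 0 ≤ Q a) ∧ ∑ a, Q a = 1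

/-- A discrete memoryless channel, i.e. a stochastic matrix from `X` to `Y`. -/
def IsChannel {X Y : Type*} [Fintype X] [Fintype Y] (W : X → Y → ℝ) : Prop :=
  (∀ x y, 0 ≤ W x y) ∧ ∀ x, ∑ y, W x y = 1

/-- The Gallager function `E_o(ρ, Q)`. -/
noncomputable def Eo {X Y : Type*} [Fintype X] [Fintype Y]
    (W : X → Y → ℝ) (ρ : ℝ) (Q : X → ℝ) : ℝ :=
  - Real.log (∑ y, (∑ x, Q x * W x y ^ (1 / (1 + ρ))) ^ (1 + ρ))

/-- The random coding exponent `E_r(R, Q)` for input distribution `Q`. -/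
noncomputable def ErQ {X Y : Type*} [Fintype X] [Fintype Y]
    (W : X → Y → ℝ) (R : ℝ) (Q : X → ℝ) : ℝ :=
  sSup ((fun ρ => -ρ * R + Eo W ρ Q) '' Set.Icc (0 : ℝ) 1)

/-- The random coding exponent `E_r(R)`. -/
noncomputable def Er {X Y : Type*} [Fintype X] [Fintype Y]
    (W : X → Y → ℝ) (R : ℝ) : ℝ :=
  sSup {v : ℝ | ∃ Q : X → ℝ, IsDist Q ∧ v = ErQ W R Q}

/-- The mutual information `I(Q; W)` (natural logarithm). -/
noncomputable def MI {X Y : Type*} [Fintype X] [Fintype Y]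
    (W : X → Y → ℝ) (Q : X → ℝ) : ℝ :=
  ∑ x, ∑ y, Q x * W x y * Real.log (W x y / ∑ x', Q x' * W x' y)

/-- The capacity `C = max_Q I(Q;W)`. -/
noncomputable def Capacity {X Y : Type*} [Fintype X] [Fintype Y]
    (W : X → Y → ℝ) : ℝ :=
  sSup {v : ℝ | ∃ Q : X → ℝ, IsDist Q ∧ v = MI W Q}

/-- The critical rate of the input distribution `Q`:
`R_cr(Q) = ∂E_o(ρ,Q)/∂ρ |_{ρ=1}`. -/
noncomputable def RcrQ {X Y : Type*} [Fintype X] [Fintype Y]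
    (W : X → Y → ℝ) (Q : X → ℝ) : ℝ :=
  deriv (fun ρ => Eo W ρ Q) 1

/-- The critical rate of the channel: the largest `R` with
`E_r(R) = -R + max_Q E_o(1,Q)`. -/
noncomputable def Rcr {X Y : Type*} [Fintype X] [Fintype Y]
    (W : X → Y → ℝ) : ℝ :=
  sSup {R : ℝ | Er W R = -R + sSup {v : ℝ | ∃ Q : X → ℝ, IsDist Q ∧ v = Eo W 1 Q}}

/-- The rate `R_∞ = inf {R ≥ 0 : E_SP(R) < ∞}` (finiteness of the
sphere-packing exponent expressed as boundedness of the family of affine maps). -/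
noncomputable def Rinf {X Y : Type*} [Fintype X] [Fintype Y]
    (W : X → Y → ℝ) : ℝ :=
  sInf {R : ℝ | 0 ≤ R ∧
    BddAbove {v : ℝ | ∃ (Q : X → ℝ) (ρ : ℝ), IsDist Q ∧ 0 ≤ ρ ∧ v = -ρ * R + Eo W ρ Q}}

/-- The pair `(Q, W)` is singular if `W(y|x) = W(y|z)` whenever
`Q(x)W(y|x)Q(z)W(y|z) > 0`. -/
def Singular {X Y : Type*} (W : X → Y → ℝ) (Q : X → ℝ) : Prop :=
  ∀ x y z, 0 < Q x * W x y * (Q z * W z y) → W x y = W z y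

/-- `ρ^*_R(Q) = -∂E_r(a,Q)/∂a |_{a=R}`. -/
noncomputable def rhoStarQ {X Y : Type*} [Fintype X] [Fintype Y]
    (W : X → Y → ℝ) (Q : X → ℝ) (R : ℝ) : ℝ :=
  - deriv (fun a => ErQ W a Q) R

/-- The number of messages of an `(N, R)` code: `⌈exp (N R)⌉`. -/
noncomputable def nMsgs (N : ℕ) (R : ℝ) : ℕ := ⌈Real.exp (N * R)⌉₊

/-- The `N`-fold memoryless extension of the channel `W`. -/
noncomputable def Wn {X Y : Type*} (W : X → Y → ℝ) {N : ℕ}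
    (c : Fin N → X) (y : Fin N → Y) : ℝ :=
  ∏ n, W (c n) (y n)

/-- The maximal error probability of the code `(f, φ)` over the `N`-fold
memoryless extension of `W`. -/
noncomputable def Pmax {X Y : Type*} [Fintype X] [Fintype Y] {M N : ℕ}
    (W : X → Y → ℝ) (f : Fin M → Fin N → X) (φ : (Fin N → Y) → Fin M) : ℝ :=
  ⨆ m : Fin M, ∑ y : Fin N → Y, Wn W (f m) y * (if φ y ≠ m then (1 : ℝ) else 0)

/-- The ensemble average error probability `P̄_e(Q, N, R)`: the `⌈exp (N R)⌉`
codewords are drawn i.i.d. from `Q^N` and decoded by maximum-likelihood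
decoding, ties counted as errors. -/
noncomputable def Pbar {X Y : Type*} [Fintype X] [Fintype Y]
    (W : X → Y → ℝ) (Q : X → ℝ) (N : ℕ) (R : ℝ) : ℝ :=
  ∑ c : Fin (nMsgs N R) → Fin N → X,
    (∏ m, ∏ n, Q (c m n)) *
      ((nMsgs N R : ℝ)⁻¹ *
        ∑ m, ∑ y : Fin N → Y,
          Wn W (c m) y *
            (if ∃ m', m' ≠ m ∧ Wn W (c m) y ≤ Wn W (c m') y then (1 : ℝ) else 0))

/-- The tilted output distribution `f_ρ`. -/
noncomputable def fRho {X Y : Type*} [Fintype X] [Fintype Y]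
    (W : X → Y → ℝ) (Q : X → ℝ) (ρ : ℝ) (y : Y) : ℝ :=
  (∑ x, Q x * W x y ^ (1 / (1 + ρ))) ^ (1 + ρ) /
    ∑ b, (∑ a, Q a * W a b ^ (1 / (1 + ρ))) ^ (1 + ρ)

/-- The cumulant generating function
`Λ_ρ(λ) = log E_{P_{X,Y}}[exp(λ log (f_ρ(Y)/W(Y|X)))]` with `P_{X,Y} = Q × W`. -/
noncomputable def Lam {X Y : Type*} [Fintype X] [Fintype Y]
    (W : X → Y → ℝ) (Q : X → ℝ) (ρ : ℝ) (t : ℝ) : ℝ :=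
  Real.log (∑ x, ∑ y, Q x * W x y * Real.exp (t * Real.log (fRho W Q ρ y / W x y)))

/-- `P_{X,Y,Z}(S̃_Q)` where `P_{X,Y,Z}(x,y,z) = Q(x)W(y|x)Q(z)` and
`S̃_Q = {(x,y,z) : Q(x)W(y|x)Q(z)W(y|z) > 0}`. -/
noncomputable def PStilde {X Y : Type*} [Fintype X] [Fintype Y]
    (W : X → Y → ℝ) (Q : X → ℝ) : ℝ :=
  ∑ x, ∑ y, ∑ z,
    if 0 < Q x * W x y * (Q z * W z y) then Q x * W x y * Q z else 0

/-- The bivariate cumulant generating function `Λ_{1,ρ}(v)` with respect to the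
conditional distribution `P̃_{X,Y,Z}` of `P_{X,Y,Z}` given `S̃_Q`. -/
noncomputable def Lam1 {X Y : Type*} [Fintype X] [Fintype Y]
    (W : X → Y → ℝ) (Q : X → ℝ) (ρ : ℝ) (v : ℝ × ℝ) : ℝ :=
  Real.log ((∑ x, ∑ y, ∑ z,
    if 0 < Q x * W x y * (Q z * W z y) then
      Q x * W x y * Q z *
        Real.exp (v.1 * Real.log (W x y / fRho W Q ρ y) +
          v.2 * Real.log (W z y / W x y))
    else 0) / PStilde W Q)

/-- The subdifferential of `f : ℝ → ℝ` at `R` (for convex `f`). -/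
def Subderiv (f : ℝ → ℝ) (R : ℝ) : Set ℝ :=
  {g : ℝ | ∀ x, f R + g * (x - R) ≤ f x}

/-- The tilted backward channel `P^ρ_{X|Y}`. -/
noncomputable def PXgY {X Y : Type*} [Fintype X]
    (W : X → Y → ℝ) (Q : X → ℝ) (ρ : ℝ) (x : X) (y : Y) : ℝ :=
  Q x * W x y ^ (1 / (1 + ρ)) / ∑ a, Q a * W a y ^ (1 / (1 + ρ))

/-- The tilted joint distribution `P^ρ_{X,Y}(x,y) = P^ρ_{X|Y}(x|y) P^ρ_Y(y)`. -/
noncomputable def PXY {X Y : Type*} [Fintype X] [Fintype Y]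
    (W : X → Y → ℝ) (Q : X → ℝ) (ρ : ℝ) (x : X) (y : Y) : ℝ :=
  PXgY W Q ρ x y * fRho W Q ρ y

/-!
`Λ_ρ` is a log-sum-exp function of `λ`, so `Λ_ρ''(λ)` is the variance of `log (f_ρ(Y) / W(Y|X))`
under the tilted weights `Q(x) W(y|x) exp (λ log (f_ρ(y) / W(y|x)))`. Nonsingularity supplies two
points `(x, y)` and `(z, y)` of positive mass with `W(y|x) ≠ W(y|z)`; as `f_ρ(y) > 0`, the log-ratio
differs there, so the variance is positive.
-/

section LogSumExp

variable {ι : Type*} [Fintype ι]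

lemma sum_sum_mul_mul_sub_sq (w a : ι → ℝ) :
    ∑ i, ∑ j, w i * w j * (a i - a j) ^ 2
      = 2 * ((∑ i, w i * a i ^ 2) * ∑ i, w i - (∑ i, w i * a i) ^ 2) := by
  simp_rw [show ∀ i j, w i * w j * (a i - a j) ^ 2
      = w i * a i ^ 2 * w j - 2 * (w i * a i) * (w j * a j) + w i * (w j * a j ^ 2)
      from fun i j => by ring]
  simp_rw [Finset.sum_add_distrib, Finset.sum_sub_distrib, ← Finset.mul_sum, ← Finset.sum_mul,
    ← Finset.mul_sum]
  ring

lemma sq_sum_mul_lt_sum_mul_sq_mul_sum {w a : ι → ℝ} (hw : ∀ i, 0 ≤ w i) {i₀ j₀ : ι}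
    (hi₀ : 0 < w i₀) (hj₀ : 0 < w j₀) (hne : a i₀ ≠ a j₀) :
    (∑ i, w i * a i) ^ 2 < (∑ i, w i * a i ^ 2) * ∑ i, w i := by
  have hterm : ∀ i j, 0 ≤ w i * w j * (a i - a j) ^ 2 := fun i j => by
    have := hw i; have := hw j; positivity
  have hpos : 0 < ∑ i, ∑ j, w i * w j * (a i - a j) ^ 2 := by
    refine Finset.sum_pos' (fun i _ => Finset.sum_nonneg fun j _ => hterm i j)
      ⟨i₀, Finset.mem_univ _, Finset.sum_pos' (fun j _ => hterm i₀ j)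
        ⟨j₀, Finset.mem_univ _, ?_⟩⟩
    have : a i₀ - a j₀ ≠ 0 := sub_ne_zero.mpr hne
    positivity
  linarith [sum_sum_mul_mul_sub_sq w a]

noncomputable def expMoment (p a : ι → ℝ) (k : ℕ) (s : ℝ) : ℝ :=
  ∑ i, p i * a i ^ k * exp (s * a i)

lemma hasDerivAt_expMoment (p a : ι → ℝ) (k : ℕ) (s : ℝ) :
    HasDerivAt (expMoment p a k) (expMoment p a (k + 1) s) s := by
  have h := HasDerivAt.fun_sum (u := Finset.univ) fun i _ =>
    ((hasDerivAt_mul_const (a i)).exp (x := s)).const_mul (p i * a i ^ k)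
  exact h.congr_deriv (Finset.sum_congr rfl fun i _ => by ring)

variable {p : ι → ℝ} (a : ι → ℝ)

lemma expMoment_zero_pos (hp : ∀ i, 0 ≤ p i) {i₀ : ι} (hi₀ : 0 < p i₀) (s : ℝ) :
    0 < expMoment p a 0 s :=
  Finset.sum_pos' (fun i _ => by have := hp i; positivity)
    ⟨i₀, Finset.mem_univ _, by simpa using mul_pos hi₀ (exp_pos (s * a i₀))⟩

lemma deriv_log_expMoment_zero (hp : ∀ i, 0 ≤ p i) {i₀ : ι} (hi₀ : 0 < p i₀) :
    deriv (fun s => log (expMoment p a 0 s)) = fun s => expMoment p a 1 s / expMoment p a 0 s :=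
  funext fun s =>
    ((hasDerivAt_expMoment p a 0 s).log (expMoment_zero_pos a hp hi₀ s).ne').deriv

lemma deriv_deriv_log_expMoment_zero (hp : ∀ i, 0 ≤ p i) {i₀ : ι} (hi₀ : 0 < p i₀) (t : ℝ) :
    deriv (deriv fun s => log (expMoment p a 0 s)) t
      = (expMoment p a 2 t * expMoment p a 0 t - expMoment p a 1 t ^ 2)
          / expMoment p a 0 t ^ 2 := by
  rw [deriv_log_expMoment_zero a hp hi₀,
    ((hasDerivAt_expMoment p a 1 t).fun_div (hasDerivAt_expMoment p a 0 t)
      (expMoment_zero_pos a hp hi₀ t).ne').deriv]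
  ring

lemma deriv_deriv_log_sum_mul_exp_pos (hp : ∀ i, 0 ≤ p i) {i₀ j₀ : ι}
    (hi₀ : 0 < p i₀) (hj₀ : 0 < p j₀) (hne : a i₀ ≠ a j₀) (t : ℝ) :
    0 < deriv (deriv fun s => log (∑ i, p i * exp (s * a i))) t := by
  have hlse : (fun s => log (∑ i, p i * exp (s * a i))) = fun s => log (expMoment p a 0 s) := by
    simp only [expMoment, pow_zero, mul_one]
  rw [hlse, deriv_deriv_log_expMoment_zero a hp hi₀]
  refine div_pos (sub_pos.mpr ?_) (pow_pos (expMoment_zero_pos a hp hi₀ t) 2)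
  have hvar := sq_sum_mul_lt_sum_mul_sq_mul_sum (w := fun i => p i * exp (t * a i)) (a := a)
    (fun i => by have := hp i; positivity)
    (mul_pos hi₀ (exp_pos _)) (mul_pos hj₀ (exp_pos _)) hne
  have hM : ∀ k, expMoment p a k t = ∑ i, p i * exp (t * a i) * a i ^ k := fun k =>
    Finset.sum_congr rfl fun i _ => by ring
  simp only [hM, pow_zero, pow_one, mul_one]
  exact hvar

end LogSumExp

lemma exists_of_not_singular {X Y : Type*} {W : X → Y → ℝ} {Q : X → ℝ}
    (hW : ∀ x y, 0 ≤ W x y) (hQ : ∀ x, 0 ≤ Q x) (hns : ¬ Singular W Q) :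
    ∃ x y z, 0 < Q x ∧ 0 < W x y ∧ 0 < Q z ∧ 0 < W z y ∧ W x y ≠ W z y := by
  simp only [Singular, not_forall] at hns
  obtain ⟨x, y, z, hpos, hne⟩ := hns
  have hx := hW x y; have hz := hW z y; have hQx := hQ x; have hQz := hQ z
  refine ⟨x, y, z, ?_, ?_, ?_, ?_, hne⟩ <;>
    · by_contra h
      simp_all [le_antisymm (not_lt.mp h)]

section Channel

variable {X Y : Type*} [Fintype X] [Fintype Y] {W : X → Y → ℝ} {Q : X → ℝ}

lemma fRho_pos (hW : ∀ x y, 0 ≤ W x y) (hQ : ∀ x, 0 ≤ Q x) (ρ : ℝ) {x : X} {y : Y}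
    (hQx : 0 < Q x) (hWxy : 0 < W x y) : 0 < fRho W Q ρ y := by
  have hS : ∀ b, 0 ≤ ∑ a, Q a * W a b ^ (1 / (1 + ρ)) := fun b =>
    Finset.sum_nonneg fun a _ => mul_nonneg (hQ a) (rpow_nonneg (hW a b) _)
  have hSy : 0 < ∑ a, Q a * W a y ^ (1 / (1 + ρ)) :=
    Finset.sum_pos' (fun a _ => mul_nonneg (hQ a) (rpow_nonneg (hW a y) _))
      ⟨x, Finset.mem_univ _, mul_pos hQx (rpow_pos_of_pos hWxy _)⟩
  have hnum := rpow_pos_of_pos hSy (1 + ρ)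
  exact div_pos hnum (Finset.sum_pos' (fun b _ => rpow_nonneg (hS b) _)
    ⟨y, Finset.mem_univ _, hnum⟩)

lemma lam_eq_log_sum_mul_exp (ρ : ℝ) :
    (fun s => Lam W Q ρ s) = fun s => log (∑ i : X × Y,
      Q i.1 * W i.1 i.2 * exp (s * log (fRho W Q ρ i.2 / W i.1 i.2))) :=
  funext fun s => by rw [Lam, Fintype.sum_prod_type]

end Channel

theorem statement17_general {X Y : Type*} [Fintype X] [Fintype Y]
    (W : X → Y → ℝ) (hW : IsChannel W)
    (Q : X → ℝ) (hQ : IsDist Q) (hns : ¬ Singular W Q) :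
    ∀ ρ ∈ Set.Icc (0 : ℝ) 1, ∀ t : ℝ, 0 < deriv (deriv (fun s => Lam W Q ρ s)) t := by
  intro ρ _ t
  obtain ⟨x, y, z, hQx, hWxy, hQz, hWzy, hne⟩ := exists_of_not_singular hW.1 hQ.1 hns
  have hf := fRho_pos hW.1 hQ.1 ρ hQx hWxy
  have hlog_ne : log (fRho W Q ρ y / W x y) ≠ log (fRho W Q ρ y / W z y) := by
    rw [log_div hf.ne' hWxy.ne', log_div hf.ne' hWzy.ne']
    exact fun h => hne (log_injOn_pos hWxy hWzy (by linarith))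
  rw [lam_eq_log_sum_mul_exp]
  exact deriv_deriv_log_sum_mul_exp_pos (fun i : X × Y => log (fRho W Q ρ i.2 / W i.1 i.2))
    (fun i => mul_nonneg (hQ.1 i.1) (hW.1 i.1 i.2)) (i₀ := (x, y)) (j₀ := (z, y))
    (mul_pos hQx hWxy) (mul_pos hQz hWzy) hlog_ne t

/-- Nonsingular case: for every `ρ ∈ [0,1]` and every `λ ∈ ℝ`,
`Λ_ρ''(λ) > 0`. -/
theorem statement17 {X Y : Type*} [Fintype X] [Fintype Y] [Nonempty X] [Nonempty Y]
    (W : X → Y → ℝ) (hW : IsChannel W) (hcr : Rcr W < Capacity W)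
    (Q : X → ℝ) (hQ : IsDist Q) (hns : ¬ Singular W Q) :
    ∀ ρ ∈ Set.Icc (0 : ℝ) 1, ∀ t : ℝ, 0 < deriv (deriv (fun s => Lam W Q ρ s)) t :=
  statement17_general W hW Q hQ hns

end RCB
end

section
/- Let W be a discrete memoryless channel with R_cr < C, Q ∈ P(𝒳) with E_r(R,Q) > 0 for some R > R_∞, and fix r ∈ ( ∂E_o(ρ,Q)/∂ρ|_{ρ=1}, I(Q;W) ). Then Fano's exponent equals the random coding exponent: E_F(r,Q) = E_r(r,Q), where E_F(r,Q) := D( P^{ρ*_r(Q)}_{X,Y} ‖ Q×W ) is the relative entropy of the tilted joint distribution P^{ρ*_r(Q)}_{X,Y} from Q×W. -/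
open Real BigOperators
open scoped Classical

namespace RCB

/-!
Write `g(ρ) = -ρ r + E_o(ρ,Q)` and `A_y(ρ) = ∑ₓ Q(x) W(y|x)^{1/(1+ρ)}`. Hölder's inequality
makes `E_o(·,Q)` concave, and its derivative `E_o'(ρ)` is the `P^ρ_{X,Y}`-expectation of
`log W(Y|X) / (1+ρ) - log A_Y(ρ)`, which is `I(Q;W)` at `ρ = 0`. As `E_o'(0) = I(Q;W) > r`, the
maximiser `p` of `g` over `ρ ≥ 0` is positive, so `E_o'(p) = r`; as `E_o'(1) < r`, concavity
forces `p ≤ 1`, so `E_r(r,Q) = g(p)`. Finally, pointwise,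
`log (P^p_{X,Y} / (Q×W)) = E_o(p) - p (log W / (1+p) - log A_Y(p))`, whence
`D(P^p_{X,Y} ‖ Q×W) = E_o(p) - p E_o'(p) = g(p)`.
-/

theorem sum_rpow_mul_rpow_le {ι : Type*} (s : Finset ι) {f g : ι → ℝ} (hf : ∀ i, 0 ≤ f i)
    (hg : ∀ i, 0 ≤ g i) {a b : ℝ} (ha : 0 < a) (hb : 0 < b) (hab : a + b = 1) :
    ∑ i ∈ s, f i ^ a * g i ^ b ≤ (∑ i ∈ s, f i) ^ a * (∑ i ∈ s, g i) ^ b := by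
  have h := Real.inner_le_Lp_mul_Lq_of_nonneg s (Real.holderConjugate_one_div ha hb hab)
    (f := fun i => f i ^ a) (g := fun i => g i ^ b)
    (fun i _ => Real.rpow_nonneg (hf i) _) (fun i _ => Real.rpow_nonneg (hg i) _)
  simpa only [← Real.rpow_mul (hf _), ← Real.rpow_mul (hg _), one_div, one_div_one_div,
    inv_inv, mul_inv_cancel₀ ha.ne', mul_inv_cancel₀ hb.ne', Real.rpow_one] using h

theorem mul_rpow_eq_rpow_mul_rpow {q w a b e₁ e₂ : ℝ} (hq : 0 ≤ q) (hw : 0 ≤ w)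
    (hab : a + b = 1) (he : e₁ * a + e₂ * b ≠ 0) :
    q * w ^ (e₁ * a + e₂ * b) = (q * w ^ e₁) ^ a * (q * w ^ e₂) ^ b := by
  rw [Real.mul_rpow hq (Real.rpow_nonneg hw _), Real.mul_rpow hq (Real.rpow_nonneg hw _),
    ← Real.rpow_mul hw, ← Real.rpow_mul hw, Real.rpow_add' hw he]
  nth_rw 1 [← Real.rpow_one q, ← hab, Real.rpow_add' hq (by rw [hab]; norm_num)]
  ring

section Gallager

variable {X Y : Type*} [Fintype X] [Fintype Y] {W : X → Y → ℝ} {Q : X → ℝ}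

variable (W Q) in
noncomputable def gallagerSum (ρ : ℝ) (y : Y) : ℝ := ∑ x, Q x * W x y ^ (1 / (1 + ρ))

variable (W Q) in
noncomputable def gallagerPartition (ρ : ℝ) : ℝ := ∑ y, gallagerSum W Q ρ y ^ (1 + ρ)

theorem Eo_eq_neg_log_gallagerPartition (ρ : ℝ) :
    Eo W ρ Q = -Real.log (gallagerPartition W Q ρ) := rfl

theorem fRho_eq_div_gallagerPartition (ρ : ℝ) (y : Y) :
    fRho W Q ρ y = gallagerSum W Q ρ y ^ (1 + ρ) / gallagerPartition W Q ρ := rfl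

omit [Fintype Y] in
theorem PXgY_eq_div_gallagerSum (ρ : ℝ) (x : X) (y : Y) :
    PXgY W Q ρ x y = Q x * W x y ^ (1 / (1 + ρ)) / gallagerSum W Q ρ y := rfl

theorem gallagerSum_nonneg (hW : IsChannel W) (hQ : IsDist Q) (ρ : ℝ) (y : Y) :
    0 ≤ gallagerSum W Q ρ y :=
  Finset.sum_nonneg fun x _ => mul_nonneg (hQ.1 x) (Real.rpow_nonneg (hW.1 x y) _)

theorem gallagerSum_eq_zero_iff (hW : IsChannel W) (hQ : IsDist Q) {ρ : ℝ} (hρ : -1 < ρ)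
    (y : Y) : gallagerSum W Q ρ y = 0 ↔ ∀ x, Q x * W x y = 0 := by
  have hρ' : 1 + ρ ≠ 0 := by linarith
  rw [gallagerSum, Finset.sum_eq_zero_iff_of_nonneg fun x _ =>
    mul_nonneg (hQ.1 x) (Real.rpow_nonneg (hW.1 x y) _)]
  simp [Real.rpow_eq_zero_iff_of_nonneg (hW.1 _ y), hρ']

theorem gallagerPartition_pos (hW : IsChannel W) (hQ : IsDist Q) {ρ : ℝ} (hρ : -1 < ρ) :
    0 < gallagerPartition W Q ρ := by
  obtain ⟨x, hx⟩ : ∃ x, Q x ≠ 0 := by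
    by_contra! h
    simpa [h] using hQ.2
  obtain ⟨y, hy⟩ : ∃ y, W x y ≠ 0 := by
    by_contra! h
    simpa [h] using hW.2 x
  have hA : 0 < gallagerSum W Q ρ y :=
    (gallagerSum_nonneg hW hQ ρ y).lt_of_ne' fun h =>
      mul_ne_zero hx hy ((gallagerSum_eq_zero_iff hW hQ hρ y).1 h x)
  exact (Real.rpow_pos_of_pos hA _).trans_le <| Finset.single_le_sum
    (fun y _ => Real.rpow_nonneg (gallagerSum_nonneg hW hQ ρ y) _) (Finset.mem_univ y)

theorem gallagerSum_rpow_le (hW : IsChannel W) (hQ : IsDist Q) {ρ₁ ρ₂ a b : ℝ}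
    (hρ₁ : -1 < ρ₁) (hρ₂ : -1 < ρ₂) (ha : 0 < a) (hb : 0 < b) (hab : a + b = 1) (y : Y) :
    gallagerSum W Q (a * ρ₁ + b * ρ₂) y ^ (1 + (a * ρ₁ + b * ρ₂)) ≤
      (gallagerSum W Q ρ₁ y ^ (1 + ρ₁)) ^ a * (gallagerSum W Q ρ₂ y ^ (1 + ρ₂)) ^ b := by
  set u := 1 + (a * ρ₁ + b * ρ₂)
  have hu : 0 < u := by nlinarith
  have hu₁ : 0 < 1 + ρ₁ := by linarith
  have hu₂ : 0 < 1 + ρ₂ := by linarith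
  -- Hölder with weights `a (1+ρ₁) / u` and `b (1+ρ₂) / u`, which also sum to one.
  set α := a * (1 + ρ₁) / u with hα
  set β := b * (1 + ρ₂) / u with hβ
  have hαβ : α + β = 1 := by
    rw [hα, hβ, ← add_div, div_eq_one_iff_eq hu.ne']; linear_combination hab
  have hexp : 1 / (1 + ρ₁) * α + 1 / (1 + ρ₂) * β = 1 / u := by
    rw [hα, hβ]; field_simp; linarith
  have hA := gallagerSum_nonneg hW hQ
  have hsum : gallagerSum W Q (a * ρ₁ + b * ρ₂) y ≤
      gallagerSum W Q ρ₁ y ^ α * gallagerSum W Q ρ₂ y ^ β := by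
    calc gallagerSum W Q (a * ρ₁ + b * ρ₂) y
        = ∑ x, (Q x * W x y ^ (1 / (1 + ρ₁))) ^ α * (Q x * W x y ^ (1 / (1 + ρ₂))) ^ β := by
          refine Finset.sum_congr rfl fun x _ => ?_
          rw [← mul_rpow_eq_rpow_mul_rpow (hQ.1 x) (hW.1 x y) hαβ (by rw [hexp]; positivity),
            hexp]
      _ ≤ _ := sum_rpow_mul_rpow_le _
          (fun x => mul_nonneg (hQ.1 x) (Real.rpow_nonneg (hW.1 x y) _))
          (fun x => mul_nonneg (hQ.1 x) (Real.rpow_nonneg (hW.1 x y) _))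
          (by positivity) (by positivity) hαβ
  calc gallagerSum W Q (a * ρ₁ + b * ρ₂) y ^ u
      ≤ (gallagerSum W Q ρ₁ y ^ α * gallagerSum W Q ρ₂ y ^ β) ^ u := by gcongr; exact hA _ _
    _ = _ := by
      rw [Real.mul_rpow (Real.rpow_nonneg (hA _ _) _) (Real.rpow_nonneg (hA _ _) _),
        ← Real.rpow_mul (hA _ _), ← Real.rpow_mul (hA _ _), ← Real.rpow_mul (hA _ _),
        ← Real.rpow_mul (hA _ _)]
      congr 2 <;> simp only [hα, hβ] <;> field_simp

theorem gallagerPartition_le (hW : IsChannel W) (hQ : IsDist Q) {ρ₁ ρ₂ a b : ℝ}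
    (hρ₁ : -1 < ρ₁) (hρ₂ : -1 < ρ₂) (ha : 0 < a) (hb : 0 < b) (hab : a + b = 1) :
    gallagerPartition W Q (a * ρ₁ + b * ρ₂) ≤
      gallagerPartition W Q ρ₁ ^ a * gallagerPartition W Q ρ₂ ^ b :=
  (Finset.sum_le_sum fun y _ => gallagerSum_rpow_le hW hQ hρ₁ hρ₂ ha hb hab y).trans <|
    sum_rpow_mul_rpow_le _ (fun _ => Real.rpow_nonneg (gallagerSum_nonneg hW hQ _ _) _)
      (fun _ => Real.rpow_nonneg (gallagerSum_nonneg hW hQ _ _) _) ha hb hab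

theorem concaveOn_Eo (hW : IsChannel W) (hQ : IsDist Q) :
    ConcaveOn ℝ (Set.Ioi (-1)) (fun ρ => Eo W ρ Q) := by
  refine concaveOn_iff_forall_pos.2 ⟨convex_Ioi _, fun ρ₁ hρ₁ ρ₂ hρ₂ a b ha hb hab => ?_⟩
  have hF := fun {ρ : ℝ} (hρ : -1 < ρ) => gallagerPartition_pos hW hQ hρ
  have hρ : -1 < a * ρ₁ + b * ρ₂ := by
    simp only [Set.mem_Ioi] at hρ₁ hρ₂; nlinarith
  have h := Real.log_le_log (hF hρ) (gallagerPartition_le hW hQ hρ₁ hρ₂ ha hb hab)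
  rw [Real.log_mul (Real.rpow_pos_of_pos (hF hρ₁) _).ne' (Real.rpow_pos_of_pos (hF hρ₂) _).ne',
    Real.log_rpow (hF hρ₁), Real.log_rpow (hF hρ₂)] at h
  simp only [smul_eq_mul, Eo_eq_neg_log_gallagerPartition]
  linarith

end Gallager

theorem hasDerivAt_rpow_one_div_one_add {w ρ : ℝ} (hw : 0 ≤ w) (hρ : -1 < ρ) :
    HasDerivAt (fun t => w ^ (1 / (1 + t))) (-(w ^ (1 / (1 + ρ)) * Real.log w) / (1 + ρ) ^ 2)
      ρ := by
  rcases hw.eq_or_lt with rfl | hw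
  · have h : (fun t : ℝ => (0 : ℝ) ^ (1 / (1 + t))) =ᶠ[nhds ρ] fun _ => 0 := by
      filter_upwards [eventually_gt_nhds hρ] with t ht
      exact Real.zero_rpow (one_div_ne_zero (by linarith))
    simpa using (hasDerivAt_const ρ (0 : ℝ)).congr_of_eventuallyEq h
  · have hs : HasDerivAt (fun t : ℝ => 1 / (1 + t)) (-1 / (1 + ρ) ^ 2) ρ := by
      refine ((hasDerivAt_const ρ 1).div ((hasDerivAt_id' ρ).const_add 1) ?_).congr_deriv ?_
      · linarith
      · ring
    convert hs.const_rpow hw using 1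
    ring

section Derivative

variable {X Y : Type*} [Fintype X] [Fintype Y] {W : X → Y → ℝ} {Q : X → ℝ}

variable (W Q) in
noncomputable def EoDeriv (ρ : ℝ) : ℝ :=
  ∑ x, ∑ y, PXY W Q ρ x y * (Real.log (W x y) / (1 + ρ) - Real.log (gallagerSum W Q ρ y))

omit [Fintype Y] in
theorem sum_PXgY_eq_one {ρ : ℝ} {y : Y} (hA : gallagerSum W Q ρ y ≠ 0) :
    ∑ x, PXgY W Q ρ x y = 1 := by
  simp only [PXgY_eq_div_gallagerSum, ← Finset.sum_div]
  exact div_self hA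

theorem hasDerivAt_gallagerSum (hW : IsChannel W) {ρ : ℝ} (hρ : -1 < ρ) (y : Y) :
    HasDerivAt (fun t => gallagerSum W Q t y)
      (-(∑ x, Q x * W x y ^ (1 / (1 + ρ)) * Real.log (W x y)) / (1 + ρ) ^ 2) ρ := by
  refine (HasDerivAt.fun_sum (u := Finset.univ) fun x _ =>
    (hasDerivAt_rpow_one_div_one_add (hW.1 x y) hρ).const_mul (Q x)).congr_deriv ?_
  simp only [neg_div, Finset.sum_div, ← Finset.sum_neg_distrib]
  exact Finset.sum_congr rfl fun x _ => by ring

theorem hasDerivAt_gallagerSum_rpow (hW : IsChannel W) (hQ : IsDist Q) {ρ : ℝ} (hρ : -1 < ρ)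
    (y : Y) :
    HasDerivAt (fun t => gallagerSum W Q t y ^ (1 + t))
      (gallagerSum W Q ρ y ^ (1 + ρ) * ∑ x, PXgY W Q ρ x y *
        (Real.log (gallagerSum W Q ρ y) - Real.log (W x y) / (1 + ρ))) ρ := by
  have hρ' : 0 < 1 + ρ := by linarith
  rcases (gallagerSum_nonneg hW hQ ρ y).eq_or_lt with hA | hA
  · -- the support condition `∀ x, Q x * W x y = 0` does not depend on `t`
    have h : (fun t => gallagerSum W Q t y ^ (1 + t)) =ᶠ[nhds ρ] fun _ => 0 := by
      filter_upwards [eventually_gt_nhds hρ] with t ht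
      rw [(gallagerSum_eq_zero_iff hW hQ ht y).2 ((gallagerSum_eq_zero_iff hW hQ hρ y).1 hA.symm),
        Real.zero_rpow (by linarith)]
    rw [← hA, Real.zero_rpow hρ'.ne', zero_mul]
    exact (hasDerivAt_const ρ (0 : ℝ)).congr_of_eventuallyEq h
  · refine ((hasDerivAt_gallagerSum hW hρ y).rpow ((hasDerivAt_id' ρ).const_add 1)
      hA).congr_deriv ?_
    have hsum : ∑ x, PXgY W Q ρ x y *
        (Real.log (gallagerSum W Q ρ y) - Real.log (W x y) / (1 + ρ)) =
        Real.log (gallagerSum W Q ρ y) -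
          (∑ x, Q x * W x y ^ (1 / (1 + ρ)) * Real.log (W x y)) /
            (gallagerSum W Q ρ y * (1 + ρ)) := by
      simp only [mul_sub, Finset.sum_sub_distrib, ← Finset.sum_mul, sum_PXgY_eq_one hA.ne',
        one_mul, Finset.sum_div]
      refine congrArg _ (Finset.sum_congr rfl fun x _ => ?_)
      rw [PXgY_eq_div_gallagerSum]
      field_simp
    rw [hsum, add_sub_cancel_left, Real.rpow_add hA, Real.rpow_one]
    field_simp
    ring

theorem hasDerivAt_Eo (hW : IsChannel W) (hQ : IsDist Q) {ρ : ℝ} (hρ : -1 < ρ) :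
    HasDerivAt (fun t => Eo W t Q) (EoDeriv W Q ρ) ρ := by
  have hF := HasDerivAt.fun_sum (u := Finset.univ) fun y _ =>
    hasDerivAt_gallagerSum_rpow hW hQ hρ y
  refine (hF.log (gallagerPartition_pos hW hQ hρ).ne').neg.congr_deriv ?_
  rw [EoDeriv, Finset.sum_comm, ← neg_div, ← Finset.sum_neg_distrib, Finset.sum_div]
  refine Finset.sum_congr rfl fun y _ => ?_
  simp only [PXY, fRho_eq_div_gallagerPartition, gallagerPartition, Finset.mul_sum,
    ← Finset.sum_neg_distrib, Finset.sum_div]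
  exact Finset.sum_congr rfl fun x _ => by ring

end Derivative

section TiltedDistribution

variable {X Y : Type*} [Fintype X] [Fintype Y] {W : X → Y → ℝ} {Q : X → ℝ}

theorem gallagerPartition_zero (hW : IsChannel W) (hQ : IsDist Q) :
    gallagerPartition W Q 0 = 1 := by
  simp only [gallagerPartition, gallagerSum, add_zero, div_one, Real.rpow_one]
  rw [Finset.sum_comm]
  simp [← Finset.mul_sum, hW.2, hQ.2]

theorem PXY_zero (hW : IsChannel W) (hQ : IsDist Q) (x : X) (y : Y) :
    PXY W Q 0 x y = Q x * W x y := by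
  simp only [PXY, PXgY_eq_div_gallagerSum, fRho_eq_div_gallagerPartition,
    gallagerPartition_zero hW hQ, add_zero, div_one, Real.rpow_one]
  by_cases hA : gallagerSum W Q 0 y = 0
  · simp [(gallagerSum_eq_zero_iff hW hQ (by norm_num) y).1 hA x]
  · exact div_mul_cancel₀ _ hA

theorem EoDeriv_zero (hW : IsChannel W) (hQ : IsDist Q) : EoDeriv W Q 0 = MI W Q := by
  refine Finset.sum_congr rfl fun x _ => Finset.sum_congr rfl fun y _ => ?_
  rw [PXY_zero hW hQ]
  by_cases h : Q x * W x y = 0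
  · simp [h]
  have hA : gallagerSum W Q 0 y = ∑ x', Q x' * W x' y := by simp [gallagerSum]
  have hpos : 0 < ∑ x', Q x' * W x' y :=
    (lt_of_le_of_ne (mul_nonneg (hQ.1 x) (hW.1 x y)) (Ne.symm h)).trans_le <|
      Finset.single_le_sum (fun x' _ => mul_nonneg (hQ.1 x') (hW.1 x' y)) (Finset.mem_univ x)
  rw [hA, add_zero, div_one, Real.log_div (right_ne_zero_of_mul h) hpos.ne']

theorem sum_PXY (hW : IsChannel W) (hQ : IsDist Q) {ρ : ℝ} (hρ : -1 < ρ) :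
    ∑ x, ∑ y, PXY W Q ρ x y = 1 := by
  rw [Finset.sum_comm]
  have hfRho : ∀ y, ∑ x, PXY W Q ρ x y = fRho W Q ρ y := fun y => by
    simp only [PXY, ← Finset.sum_mul]
    by_cases hA : gallagerSum W Q ρ y = 0
    · rw [fRho_eq_div_gallagerPartition, hA, Real.zero_rpow (by linarith), zero_div, mul_zero]
    · rw [sum_PXgY_eq_one hA, one_mul]
  simp only [hfRho, fRho_eq_div_gallagerPartition, ← Finset.sum_div]
  exact div_self (gallagerPartition_pos hW hQ hρ).ne'

theorem log_PXY_div (hW : IsChannel W) (hQ : IsDist Q) {ρ : ℝ} (hρ : -1 < ρ) {x : X} {y : Y}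
    (h : PXY W Q ρ x y ≠ 0) :
    Real.log (PXY W Q ρ x y / (Q x * W x y)) = Eo W ρ Q -
      ρ * (Real.log (W x y) / (1 + ρ) - Real.log (gallagerSum W Q ρ y)) := by
  have hρ' : 0 < 1 + ρ := by linarith
  simp only [PXY, PXgY_eq_div_gallagerSum, fRho_eq_div_gallagerPartition, ne_eq, mul_eq_zero,
    div_eq_zero_iff, not_or] at h
  obtain ⟨⟨⟨hq, hWs⟩, hA⟩, -⟩ := h
  have hw : 0 < W x y :=
    (hW.1 x y).lt_of_ne' fun h0 => hWs (by rw [h0, Real.zero_rpow (by positivity)])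
  have hA : 0 < gallagerSum W Q ρ y := (gallagerSum_nonneg hW hQ ρ y).lt_of_ne' hA
  have hF := gallagerPartition_pos hW hQ hρ
  have e : PXY W Q ρ x y / (Q x * W x y) = W x y ^ (1 / (1 + ρ)) / W x y *
      (gallagerSum W Q ρ y ^ (1 + ρ) / gallagerSum W Q ρ y) / gallagerPartition W Q ρ := by
    rw [PXY, PXgY_eq_div_gallagerSum, fRho_eq_div_gallagerPartition]
    field_simp
  rw [e, Real.log_div (by positivity) hF.ne', Real.log_mul (by positivity) (by positivity),
    Real.log_div (by positivity) hw.ne', Real.log_div (by positivity) hA.ne',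
    Real.log_rpow hw, Real.log_rpow hA, Eo_eq_neg_log_gallagerPartition]
  field_simp
  ring

theorem sum_PXY_mul_log_div (hW : IsChannel W) (hQ : IsDist Q) {ρ : ℝ} (hρ : -1 < ρ) :
    ∑ x, ∑ y, PXY W Q ρ x y * Real.log (PXY W Q ρ x y / (Q x * W x y)) =
      Eo W ρ Q - ρ * EoDeriv W Q ρ := by
  have h : ∀ x y, PXY W Q ρ x y * Real.log (PXY W Q ρ x y / (Q x * W x y)) =
      Eo W ρ Q * PXY W Q ρ x y - ρ * (PXY W Q ρ x y *
        (Real.log (W x y) / (1 + ρ) - Real.log (gallagerSum W Q ρ y))) := fun x y => by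
    by_cases hP : PXY W Q ρ x y = 0
    · simp [hP]
    · rw [log_PXY_div hW hQ hρ hP]; ring
  simp only [h, Finset.sum_sub_distrib, ← Finset.mul_sum, sum_PXY hW hQ hρ, EoDeriv, mul_one]

end TiltedDistribution

theorem HasDerivAt.nonpos_of_eventually_le {f : ℝ → ℝ} {f' a : ℝ} (hf : HasDerivAt f f' a)
    (hmax : ∀ᶠ x in nhdsWithin a (Set.Ioi a), f x ≤ f a) : f' ≤ 0 := by
  refine le_of_tendsto ((hasDerivWithinAt_iff_tendsto_slope' Set.self_notMem_Ioi).1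
    hf.hasDerivWithinAt) ?_
  filter_upwards [hmax, self_mem_nhdsWithin] with x hfx hx
  rw [slope_def_field]
  exact div_nonpos_of_nonpos_of_nonneg (by linarith) (by linarith [Set.mem_Ioi.1 hx])

theorem statement18_general {X Y : Type*} [Fintype X] [Fintype Y]
    (W : X → Y → ℝ) (hW : IsChannel W)
    (Q : X → ℝ) (hQ : IsDist Q)
    (r : ℝ) (hr1 : deriv (fun t => Eo W t Q) 1 < r) (hr2 : r < MI W Q)
    (p : ℝ) (hp0 : 0 ≤ p)
    (hpmax : ∀ ρ : ℝ, 0 ≤ ρ → -ρ * r + Eo W ρ Q ≤ -p * r + Eo W p Q) :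
    ∑ x, ∑ y, PXY W Q p x y * Real.log (PXY W Q p x y / (Q x * W x y)) =
      ErQ W r Q := by
  have hEo := fun {ρ : ℝ} (hρ : -1 < ρ) => hasDerivAt_Eo hW hQ hρ
  have hg : ∀ ρ : ℝ, -1 < ρ →
      HasDerivAt (fun t => -t * r + Eo W t Q) (EoDeriv W Q ρ - r) ρ := fun ρ hρ =>
    (((hasDerivAt_id' ρ).fun_neg.mul_const r).fun_add (hEo hρ)).congr_deriv (by ring)
  have hp_pos : 0 < p := by
    refine hp0.lt_of_ne fun hp => ?_
    subst hp
    have := HasDerivAt.nonpos_of_eventually_le (hg 0 (by norm_num))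
      (eventually_nhdsWithin_of_forall fun ρ hρ => hpmax ρ (le_of_lt hρ))
    linarith [EoDeriv_zero hW hQ]
  have hp_crit : EoDeriv W Q p = r := by
    have hmax : IsLocalMax (fun t => -t * r + Eo W t Q) p := by
      filter_upwards [Ioi_mem_nhds hp_pos] with ρ hρ using hpmax ρ (le_of_lt hρ)
    linarith [hmax.hasDerivAt_eq_zero (hg p (by linarith))]
  have hp_le_one : p ≤ 1 := by
    by_contra! hp
    have hslope := (concaveOn_Eo hW hQ).slope_le_of_hasDerivAt
      (by norm_num : (1 : ℝ) ∈ Set.Ioi (-1)) (by simp only [Set.mem_Ioi]; linarith) hp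
      (hEo (by norm_num))
    rw [(hEo (by norm_num)).deriv] at hr1
    rw [slope_def_field, div_le_iff₀ (by linarith)] at hslope
    linarith [hpmax 1 zero_le_one, mul_lt_mul_of_pos_right hr1 (sub_pos.2 hp)]
  have hErQ : ErQ W r Q = -p * r + Eo W p Q :=
    IsGreatest.csSup_eq ⟨⟨p, ⟨hp0, hp_le_one⟩, rfl⟩, by
      rintro _ ⟨ρ, hρ, rfl⟩; exact hpmax ρ hρ.1⟩
  rw [sum_PXY_mul_log_div hW hQ (by linarith), hErQ, hp_crit]
  ring

/-- Fano's exponent equals the random coding exponent: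
`E_F(r,Q) = D(P^{ρ*_r(Q)}_{X,Y} ‖ Q×W) = E_r(r,Q)`. -/
theorem statement18 {X Y : Type*} [Fintype X] [Fintype Y] [Nonempty X] [Nonempty Y]
    (W : X → Y → ℝ) (hW : IsChannel W) (hcr : Rcr W < Capacity W)
    (Q : X → ℝ) (hQ : IsDist Q)
    (hEr : ∃ R : ℝ, Rinf W < R ∧ 0 < ErQ W R Q)
    (r : ℝ) (hr1 : deriv (fun t => Eo W t Q) 1 < r) (hr2 : r < MI W Q)
    (p : ℝ) (hp0 : 0 ≤ p)
    (hpmax : ∀ ρ : ℝ, 0 ≤ ρ → -ρ * r + Eo W ρ Q ≤ -p * r + Eo W p Q)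
    (hpuniq : ∀ p' : ℝ, 0 ≤ p' →
      (∀ ρ : ℝ, 0 ≤ ρ → -ρ * r + Eo W ρ Q ≤ -p' * r + Eo W p' Q) → p' = p) :
    ∑ x, ∑ y, PXY W Q p x y * Real.log (PXY W Q p x y / (Q x * W x y)) =
      ErQ W r Q :=
  statement18_general W hW Q hQ r hr1 hr2 p hp0 hpmax

end RCB
end
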